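/- Let μ > 0, λ real, and ℂ the isotropic elasticity tensor ℂE = λ(tr E)I + 2μE acting on symmetric 3×3 matrices E. For v(x) = x/(4μ|x|³), the traction (ℂ ∇̂v) n on the unit sphere, with n(x) = x the outward normal and ∇̂v the symmetric gradient, equals -x, i.e., (λ (div v) I + 2μ ∇̂v(x)) x = -x for |x| = 1. -/

import Mathlib

open Real

/-!
The field `z ↦ z / ‖z‖³` has Jacobian `I - 3 x xᵀ` at a unit vector `x`. This matrix is
symmetric, its trace `3 - 3‖x‖²` vanishes in dimension three, and it maps `x` to `-2x`.
Hence `div v = 0` and `∇̂v x = -2x / (4μ)`, so the traction is `2μ · (-2x) / (4μ) = -x`.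
-/

section
variable {E : Type*} [NormedAddCommGroup E] [InnerProductSpace ℝ E]

theorem hasFDerivAt_inv_norm_rpow_smul {p : ℝ} (hp : 1 < p) {x : E} (hx : x ≠ 0) :
    HasFDerivAt (fun z : E => (‖z‖ ^ p)⁻¹ • z)
      ((‖x‖ ^ p)⁻¹ • ContinuousLinearMap.id ℝ E
        - (p * ‖x‖ ^ (p - 2) / (‖x‖ ^ p) ^ 2) • (innerSL ℝ x).smulRight x) x := by
  have hxp : ‖x‖ ^ p ≠ 0 := (rpow_pos_of_pos (norm_pos_iff.2 hx) p).ne'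
  have hinv := (hasDerivAt_inv hxp).comp_hasFDerivAt x (hasFDerivAt_norm_rpow x hp)
  refine (hinv.smul (hasFDerivAt_id x)).congr_fderiv ?_
  ext y
  simp [smul_smul, div_eq_mul_inv]
  module

theorem hasFDerivAt_inv_norm_rpow_smul_of_norm_eq_one {p : ℝ} (hp : 1 < p) {x : E}
    (hx : ‖x‖ = 1) :
    HasFDerivAt (fun z : E => (‖z‖ ^ p)⁻¹ • z)
      (ContinuousLinearMap.id ℝ E - p • (innerSL ℝ x).smulRight x) x := by
  have h := hasFDerivAt_inv_norm_rpow_smul hp (norm_ne_zero_iff.1 (hx ▸ one_ne_zero))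
  rwa [hx, one_rpow, one_rpow, inv_one, one_smul, one_pow, mul_one, div_one] at h

end

theorem fderiv_apply_eq_of_hasFDerivAt {E ι : Type*} [Fintype ι] [NormedAddCommGroup E]
    [NormedSpace ℝ E] {v : E → EuclideanSpace ℝ ι} {D : E →L[ℝ] EuclideanSpace ℝ ι} {x : E}
    (h : HasFDerivAt v D x) (i : ι) (y : E) :
    fderiv ℝ (fun z => v z i) x y = D y i :=
  congrArg (· y) (((EuclideanSpace.proj i).hasFDerivAt.comp x h).fderiv :)

section
variable {ι : Type*} [Fintype ι] [DecidableEq ι] {x : EuclideanSpace ℝ ι}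

theorem sum_single_sub_three_mul_self_of_norm_eq_one (hx : ‖x‖ = 1) :
    ∑ j, (EuclideanSpace.single j (1 : ℝ) j - 3 * (x j * x j)) = Fintype.card ι - 3 := by
  simp [Finset.sum_sub_distrib, ← Finset.mul_sum, ← sq, ← EuclideanSpace.real_norm_sq_eq, hx]

theorem sum_single_sub_three_mul_mul_of_norm_eq_one (hx : ‖x‖ = 1) (i : ι) :
    ∑ j, (EuclideanSpace.single j (1 : ℝ) i - 3 * (x j * x i)) * x j = -2 * x i := by
  have hsq : ∑ j, 3 * (x j * x i) * x j = 3 * x i * ‖x‖ ^ 2 := by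
    rw [EuclideanSpace.real_norm_sq_eq, Finset.mul_sum]
    exact Finset.sum_congr rfl fun j _ => by ring
  simp [sub_mul, Finset.sum_sub_distrib, hsq, hx]
  ring

end

/-- For `v(x) = x/(4μ|x|³)`, the elastic traction `(ℂ ∇̂v) n` on the unit sphere
(with outward normal `n(x) = x`) equals `-x`. -/
theorem traction_unit_sphere (μ lam : ℝ) (hμ : 0 < μ)
    (v : EuclideanSpace ℝ (Fin 3) → EuclideanSpace ℝ (Fin 3))
    (hv : ∀ x, v x = (1 / (4 * μ * ‖x‖ ^ 3)) • x)
    (x : EuclideanSpace ℝ (Fin 3)) (hx : ‖x‖ = 1) :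
    ∀ i : Fin 3,
      lam * (∑ j : Fin 3, fderiv ℝ (fun z => v z j) x (EuclideanSpace.single j 1)) * x i
      + 2 * μ * (∑ j : Fin 3,
          ((fderiv ℝ (fun z => v z i) x (EuclideanSpace.single j 1)
            + fderiv ℝ (fun z => v z j) x (EuclideanSpace.single i 1)) / 2) * x j)
      = -(x i) := by
  have hv' : v = fun z => (4 * μ)⁻¹ • (‖z‖ ^ (3 : ℝ))⁻¹ • z := by
    ext1 z
    rw [hv, smul_smul, one_div, mul_inv, rpow_ofNat]
  have hD : HasFDerivAt v ((4 * μ)⁻¹ • (ContinuousLinearMap.id ℝ _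
      - (3 : ℝ) • (innerSL ℝ x).smulRight x)) x :=
    hv' ▸ (hasFDerivAt_inv_norm_rpow_smul_of_norm_eq_one (p := 3) (by norm_num) hx).const_smul
      (4 * μ)⁻¹
  have hpartial : ∀ i j, fderiv ℝ (fun z => v z i) x (EuclideanSpace.single j 1)
      = (4 * μ)⁻¹ * (EuclideanSpace.single j (1 : ℝ) i - 3 * (x j * x i)) := by
    intro i j
    simp [fderiv_apply_eq_of_hasFDerivAt hD, EuclideanSpace.inner_single_right]
  have hsymm : ∀ i j, fderiv ℝ (fun z => v z j) x (EuclideanSpace.single i 1)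
      = fderiv ℝ (fun z => v z i) x (EuclideanSpace.single j 1) := by
    intro i j
    simp only [hpartial, PiLp.single_apply, eq_comm, mul_comm]
  intro i
  simp only [hsymm i, add_self_div_two, hpartial, mul_assoc, ← Finset.mul_sum,
    sum_single_sub_three_mul_self_of_norm_eq_one hx,
    sum_single_sub_three_mul_mul_of_norm_eq_one hx, Fintype.card_fin]
  field_simp
  ring
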